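/- For the maximizer (s₁,s₂) of the Legendre transform Ψ_p*(τt, τ^p), the first order conditions imply the identity τ^p p s₂ + τ t s₁ = τ^p - 1. -/

import Mathlib

/-!
The map `(t₁, 1 - p t₂) ↦ (e^ε t₁, e^{pε} (1 - p t₂))` leaves the argument of `M_{γ_p}` in
`Λ_p(t₁, t₂)` unchanged and lowers `Λ_p` by exactly `ε`. Since `Ψ_p` averages `Λ_p(u s₁, s₂)`
against a probability measure, `Ψ_p` decreases at unit speed along the curve
`ε ↦ (e^ε s₁, (1 - e^{pε} (1 - p s₂)) / p)`, so the derivative of `Ψ_p` at `(s₁, s₂)` in the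
direction `(s₁, -(1 - p s₂))` is `-1`; by the first order conditions it is also
`τ t s₁ - τ^p (1 - p s₂)`. No differentiation under the integral sign is needed, only the
integrability of `u ↦ Λ_p(u s₁, s₂)` under `γ₂`: `M_{γ_p} ≥ 1` by symmetry, and Young's inequality
gives `log M_{γ_p}(x) ≤ C + |2x|^q / q` for the conjugate exponent `q`.
-/

open Real MeasureTheory

/-- The generalized `p`-th Gaussian density. -/
noncomputable def fp (p : ℝ) (y : ℝ) : ℝ :=
  Real.exp (-|y| ^ p / p) / (2 * p ^ (1/p) * Real.Gamma (1 + 1/p))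

/-- The standard Gaussian density. -/
noncomputable def gauss (u : ℝ) : ℝ := Real.exp (-u ^ 2 / 2) / Real.sqrt (2 * Real.pi)

open ProbabilityTheory

lemma integrable_exp_neg_mul_abs_rpow {p b : ℝ} (hp : 0 < p) (hb : 0 < b) :
    Integrable fun y : ℝ => exp (-b * |y| ^ p) := by
  refine Integrable.of_integral_ne_zero ?_
  rw [integral_comp_abs (f := fun y => exp (-b * y ^ p)), integral_exp_neg_mul_rpow hp hb]
  have := Gamma_pos_of_pos (by positivity : 0 < 1 / p + 1)
  positivity

lemma fp_pos {p : ℝ} (hp : 0 < p) (y : ℝ) : 0 < fp p y := by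
  have := Gamma_pos_of_pos (by positivity : 0 < 1 + 1 / p)
  unfold fp; positivity

lemma fp_neg (p y : ℝ) : fp p (-y) = fp p y := by
  simp [fp]

lemma integral_fp {p : ℝ} (hp : 0 < p) : ∫ y, fp p y = 1 := by
  have hZ := Gamma_pos_of_pos (by positivity : 0 < 1 + 1 / p)
  simp_rw [fp, integral_div, show ∀ y : ℝ, -|y| ^ p / p = -p⁻¹ * |y| ^ p from fun y => by ring]
  rw [integral_comp_abs (f := fun y => exp (-p⁻¹ * y ^ p)),
    integral_exp_neg_mul_rpow hp (by positivity), inv_rpow hp.le, ← rpow_neg hp.le, neg_div,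
    neg_neg, add_comm (1 / p)]
  field_simp

lemma integrable_fp {p : ℝ} (hp : 0 < p) : Integrable (fp p) :=
  .of_integral_ne_zero (by rw [integral_fp hp]; exact one_ne_zero)

lemma mul_sub_abs_rpow_div_le {p q : ℝ} (hpq : p.HolderConjugate q) (x y : ℝ) :
    x * y - |y| ^ p / p ≤ |2 * x| ^ q / q - (1 - 2⁻¹ ^ p) / p * |y| ^ p := by
  have := young_inequality (y / 2) (2 * x) hpq
  rw [abs_div, abs_two, div_rpow (abs_nonneg y) zero_le_two, div_eq_mul_inv _ ((2:ℝ) ^ p),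
    ← inv_rpow zero_le_two] at this
  have hxy : y / 2 * (2 * x) = x * y := by ring
  have hsplit : |y| ^ p / p = |y| ^ p * 2⁻¹ ^ p / p + (1 - 2⁻¹ ^ p) / p * |y| ^ p := by ring
  linarith

noncomputable def genGaussMGF (p x : ℝ) : ℝ := ∫ y, exp (x * y) * fp p y

lemma exists_integrable_exp_mul_fp_le {p q : ℝ} (hpq : p.HolderConjugate q) :
    ∃ g : ℝ → ℝ, Integrable g ∧ ∀ x y, exp (x * y) * fp p y ≤ exp (|2 * x| ^ q / q) * g y := by
  have hp : 0 < p := hpq.pos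
  have hb : 0 < (1 - 2⁻¹ ^ p) / p := by
    have : (2⁻¹ : ℝ) ^ p < 1 := rpow_lt_one (by norm_num) (by norm_num) hp
    exact div_pos (by linarith) hp
  refine ⟨fun y => exp (-((1 - 2⁻¹ ^ p) / p) * |y| ^ p) / (2 * p ^ (1/p) * Gamma (1 + 1/p)),
    (integrable_exp_neg_mul_abs_rpow hp hb).div_const _, fun x y => ?_⟩
  have hZ := Gamma_pos_of_pos (by positivity : 0 < 1 + 1 / p)
  rw [fp, mul_div_assoc', mul_div_assoc', ← exp_add, ← exp_add]
  refine div_le_div_of_nonneg_right (exp_le_exp.mpr ?_) (by positivity)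
  linear_combination mul_sub_abs_rpow_div_le hpq x y

lemma integrable_exp_mul_fp {p : ℝ} (hp : 1 < p) (x : ℝ) :
    Integrable fun y => exp (x * y) * fp p y := by
  obtain ⟨g, hg, hle⟩ := exists_integrable_exp_mul_fp_le (.conjExponent hp)
  have hmeas : AEStronglyMeasurable (fun y => exp (x * y) * fp p y) := by unfold fp; fun_prop
  refine (hg.const_mul (exp (|2 * x| ^ p.conjExponent / p.conjExponent))).mono' hmeas
    (Filter.Eventually.of_forall fun y => ?_)
  rw [Real.norm_of_nonneg (mul_nonneg (exp_pos _).le (fp_pos (by linarith) y).le)]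
  exact hle x y

lemma genGaussMGF_neg (p x : ℝ) : genGaussMGF p (-x) = genGaussMGF p x := by
  rw [genGaussMGF, genGaussMGF, ← integral_neg_eq_self]
  simp [fp_neg]

lemma one_le_genGaussMGF {p : ℝ} (hp : 1 < p) (x : ℝ) : 1 ≤ genGaussMGF p x := by
  have hp0 : 0 < p := by linarith
  suffices 2 ≤ genGaussMGF p x + genGaussMGF p (-x) by rw [genGaussMGF_neg] at this; linarith
  calc (2 : ℝ) = ∫ y, 2 * fp p y := by rw [integral_const_mul, integral_fp hp0, mul_one]
    _ ≤ ∫ y, (exp (x * y) + exp (-x * y)) * fp p y := by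
        refine integral_mono ((integrable_fp hp0).const_mul 2) ?_ fun y => ?_
        · simp_rw [add_mul]
          exact (integrable_exp_mul_fp hp x).add (integrable_exp_mul_fp hp (-x))
        · have := add_one_le_exp (x * y)
          have := add_one_le_exp (-x * y)
          exact mul_le_mul_of_nonneg_right (by linarith) (fp_pos hp0 y).le
    _ = genGaussMGF p x + genGaussMGF p (-x) := by
        simp_rw [add_mul]
        exact integral_add (integrable_exp_mul_fp hp x) (integrable_exp_mul_fp hp (-x))

lemma exists_abs_log_genGaussMGF_le {p q : ℝ} (hpq : p.HolderConjugate q) :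
    ∃ C, ∀ x, |log (genGaussMGF p x)| ≤ C + |2 * x| ^ q / q := by
  obtain ⟨g, hg, hle⟩ := exists_integrable_exp_mul_fp_le hpq
  refine ⟨log (∫ y, g y), fun x => ?_⟩
  have hM := one_le_genGaussMGF hpq.lt x
  have hMle : genGaussMGF p x ≤ exp (|2 * x| ^ q / q) * ∫ y, g y := by
    rw [genGaussMGF, ← integral_const_mul]
    exact integral_mono (integrable_exp_mul_fp hpq.lt x) (hg.const_mul _) (hle x)
  have hg0 : 0 < ∫ y, g y := pos_of_mul_pos_right (by linarith) (exp_pos _).le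
  rw [abs_of_nonneg (log_nonneg hM), add_comm, ← log_exp (|2 * x| ^ q / q),
    ← log_mul (exp_pos _).ne' hg0.ne']
  exact log_le_log (by linarith) hMle

lemma measurable_genGaussMGF (p : ℝ) : Measurable (genGaussMGF p) :=
  (StronglyMeasurable.integral_prod_right' (f := fun z : ℝ × ℝ => exp (z.1 * z.2) * fp p z.2)
    (by unfold fp; fun_prop)).measurable

lemma integrable_log_genGaussMGF_mul_gaussianReal {p : ℝ} (hp : 1 < p) (c m : ℝ) (v : NNReal) :
    Integrable (fun u => log (genGaussMGF p (u * c))) (gaussianReal m v) := by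
  set q := p.conjExponent
  have hpq : p.HolderConjugate q := .conjExponent hp
  obtain ⟨C, hC⟩ := exists_abs_log_genGaussMGF_le hpq
  have hmom : Integrable (fun u => |u| ^ q) (gaussianReal m v) :=
    integrable_rpow_abs_of_integrable_exp_mul (X := id) one_ne_zero
      (integrable_exp_mul_gaussianReal 1) (integrable_exp_mul_gaussianReal (-1)) hpq.symm.nonneg
  refine ((integrable_const C).add (hmom.const_mul (|2 * c| ^ q / q))).mono'
    ((measurable_genGaussMGF p).comp (measurable_id.mul_const c)).log.aestronglyMeasurable
    (Filter.Eventually.of_forall fun u => ?_)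
  have : |2 * (u * c)| ^ q = |2 * c| ^ q * |u| ^ q := by
    rw [show 2 * (u * c) = (2 * c) * u by ring, abs_mul, mul_rpow (abs_nonneg _) (abs_nonneg _)]
  rw [Real.norm_eq_abs]
  exact (hC _).trans_eq (by rw [this, Pi.add_apply]; ring)

noncomputable def genGaussLambda (p t₁ t₂ : ℝ) : ℝ :=
  -(1/p) * log (1 - p * t₂) + log (genGaussMGF p (t₁ / (1 - p * t₂) ^ (1/p)))

noncomputable def genGaussPsi (p : ℝ) (s : ℝ × ℝ) : ℝ :=
  ∫ u, genGaussLambda p (u * s.1) s.2 * gauss u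

lemma genGaussLambda_scale {p t₂ : ℝ} (hp : p ≠ 0) (ht : 0 < 1 - p * t₂) (t₁ ε : ℝ) :
    genGaussLambda p (t₁ * exp ε) ((1 - (1 - p * t₂) * exp (p * ε)) / p)
      = genGaussLambda p t₁ t₂ - ε := by
  have h1 : 1 - p * ((1 - (1 - p * t₂) * exp (p * ε)) / p) = (1 - p * t₂) * exp (p * ε) := by
    field_simp; ring
  have h2 : ((1 - p * t₂) * exp (p * ε)) ^ (1 / p) = (1 - p * t₂) ^ (1 / p) * exp ε := by
    rw [mul_rpow ht.le (exp_pos _).le, ← exp_mul]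
    field_simp
  rw [genGaussLambda, genGaussLambda, h1, h2, log_mul ht.ne' (exp_pos _).ne', log_exp,
    mul_div_mul_right _ _ (exp_pos _).ne']
  field_simp
  ring

lemma integrable_genGaussLambda_gaussianReal {p : ℝ} (hp : 1 < p) (t₁ t₂ m : ℝ) (v : NNReal) :
    Integrable (fun u => genGaussLambda p (u * t₁) t₂) (gaussianReal m v) := by
  simp_rw [genGaussLambda, mul_div_assoc]
  exact (integrable_const _).add (integrable_log_genGaussMGF_mul_gaussianReal hp _ m v)

lemma integral_mul_gauss (f : ℝ → ℝ) : ∫ u, f u * gauss u = ∫ u, f u ∂gaussianReal 0 1 := by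
  rw [integral_gaussianReal_eq_integral_smul one_ne_zero]
  congr with u
  simp [gauss, gaussianPDFReal, div_eq_mul_inv, mul_comm]

lemma genGaussPsi_scale {p s₂ : ℝ} (hp : 1 < p) (hs : 0 < 1 - p * s₂) (s₁ ε : ℝ) :
    genGaussPsi p (s₁ * exp ε, (1 - (1 - p * s₂) * exp (p * ε)) / p)
      = genGaussPsi p (s₁, s₂) - ε := by
  simp only [genGaussPsi, integral_mul_gauss, ← mul_assoc,
    genGaussLambda_scale (by linarith : p ≠ 0) hs]
  rw [integral_sub (integrable_genGaussLambda_gaussianReal hp _ _ _ _) (integrable_const ε)]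
  simp

lemma hasDerivAt_scalingCurve {p : ℝ} (hp : p ≠ 0) (s₁ A : ℝ) :
    HasDerivAt (fun ε => (s₁ * exp ε, (1 - A * exp (p * ε)) / p)) (s₁, -A) 0 := by
  refine .prodMk (by simpa using (hasDerivAt_exp 0).const_mul s₁) ?_
  rw [show -A = -(A * (exp (p * id 0) * (p * 1))) / p by simp; field_simp]
  exact (((hasDerivAt_id (0 : ℝ)).const_mul p).exp.const_mul A |>.const_sub 1).div_const p

theorem stmt11_general (p t τ s₁ s₂ : ℝ) (hp : 1 < p) (hs₂ : s₂ < 1/p)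
    (Ψ : ℝ × ℝ → ℝ)
    -- Ψ_p(s₁,s₂) = ∫ Λ_p(u s₁, s₂) γ₂(du) with
    -- Λ_p(t₁,t₂) = -(1/p) log(1-p t₂) + log M_{γ_p}(t₁/(1-p t₂)^{1/p})
    (hΨ : Ψ = fun s : ℝ × ℝ => ∫ u : ℝ,
      (-(1/p) * Real.log (1 - p * s.2)
        + Real.log (∫ y : ℝ, Real.exp ((u * s.1 / (1 - p * s.2) ^ (1/p)) * y) * fp p y))
        * gauss u)
    (hdiff : DifferentiableAt ℝ Ψ (s₁, s₂))
    -- first order conditions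
    (h1 : fderiv ℝ Ψ (s₁, s₂) (1, 0) = τ * t)
    (h2 : fderiv ℝ Ψ (s₁, s₂) (0, 1) = τ ^ p) :
    τ ^ p * p * s₂ + τ * t * s₁ = τ ^ p - 1 := by
  have hp0 : p ≠ 0 := by positivity
  have hA : 0 < 1 - p * s₂ := by
    have := (lt_div_iff₀ (by positivity)).mp hs₂
    linarith [mul_comm s₂ p]
  set A := 1 - p * s₂
  have hcurve :
      (Ψ ∘ fun ε => (s₁ * exp ε, (1 - A * exp (p * ε)) / p)) = fun ε => Ψ (s₁, s₂) - ε :=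
    funext fun ε => by rw [show Ψ = genGaussPsi p from hΨ]; exact genGaussPsi_scale hp hA s₁ ε
  have hstart : (s₁ * exp 0, (1 - A * exp (p * 0)) / p) = (s₁, s₂) := by
    simp [A]; field_simp
  have hkey : fderiv ℝ Ψ (s₁, s₂) (s₁, -A) = -1 := by
    rw [← hstart] at hdiff ⊢
    refine (hdiff.hasFDerivAt.comp_hasDerivAt 0 (hasDerivAt_scalingCurve hp0 s₁ A)).unique ?_
    rw [hcurve]
    simpa using (hasDerivAt_id (0 : ℝ)).const_sub (Ψ (s₁, s₂))
  have hdir : ((s₁, -A) : ℝ × ℝ) = s₁ • (1, 0) + (-A) • (0, 1) := by simp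
  rw [hdir, map_add, map_smul, map_smul, h1, h2, smul_eq_mul, smul_eq_mul] at hkey
  linear_combination hkey

theorem stmt11 (p t τ s₁ s₂ : ℝ) (hp : 1 < p) (hτ : 0 < τ) (hs₂ : s₂ < 1/p)
    (Ψ : ℝ × ℝ → ℝ)
    -- Ψ_p(s₁,s₂) = ∫ Λ_p(u s₁, s₂) γ₂(du) with
    -- Λ_p(t₁,t₂) = -(1/p) log(1-p t₂) + log M_{γ_p}(t₁/(1-p t₂)^{1/p})
    (hΨ : Ψ = fun s : ℝ × ℝ => ∫ u : ℝ,
      (-(1/p) * Real.log (1 - p * s.2)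
        + Real.log (∫ y : ℝ, Real.exp ((u * s.1 / (1 - p * s.2) ^ (1/p)) * y) * fp p y))
        * gauss u)
    (hdiff : DifferentiableAt ℝ Ψ (s₁, s₂))
    -- first order conditions
    (h1 : fderiv ℝ Ψ (s₁, s₂) (1, 0) = τ * t)
    (h2 : fderiv ℝ Ψ (s₁, s₂) (0, 1) = τ ^ p) :
    τ ^ p * p * s₂ + τ * t * s₁ = τ ^ p - 1 :=
  stmt11_general p t τ s₁ s₂ hp hs₂ Ψ hΨ hdiff h1 h2
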